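/- Let S be a monoid, λ a nonzero cardinal, n ≤ λ a positive integer, and i ≤ n. Let x be the element of 𝓘_λ^n(S) with rows (a₁,…,a_i), (s₁,…,s_i), (b₁,…,b_i) and y the element with rows (c₁,…,c_i), (t₁,…,t_i), (d₁,…,d_i), both nonzero. Then x 𝓙 y in 𝓘_λ^n(S) if and only if there exists a permutation π of {1,…,i} such that s_j 𝓙 t_{π(j)} in S for all j = 1,…,i. -/

import Mathlib

/-!
If `x ∈ T¹ y T¹`, each label `s_j` of `x` factors as `u · t_k · v` through a label of `y`, and
`k` depends injectively on `j` because the outer factors are partial injections. Conversely,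
such factorisations along an injection `π` assemble into outer factors with rows
`(a, u, c ∘ π)` and `(d ∘ π, v, b)`. When `x 𝓙 y`, composing the two injections gives a
permutation `ρ` of the indices with `s_j ≤_𝓙 s_{ρ j}`; walking once around the cycle of `j`
gives the reverse inequality, so all these comparisons are `𝓙`-equivalences.
-/

open Classical

namespace ISemExt

/-- Carrier for the extension `𝓘_λ^n(S)`: an element is a function assigning to each
pair `(x,y)` of points of `lam` an optional value in `S` (its labelled graph). -/
def Elem (lam S : Type) : Type := lam → lam → Option S

/-- The zero element (the empty map). -/
def zeroE (lam S : Type) : Elem lam S := fun _ _ => none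

/-- Multiplication in `𝓘_λ^n(S)`: composition of labelled partial maps,
multiplying the labels along composable pairs. -/
noncomputable def mulE {lam S : Type} [Mul S] (f g : Elem lam S) : Elem lam S :=
  fun x z =>
    if h : ∃ y s t, f x y = some s ∧ g y z = some t then
      some (h.choose_spec.choose * h.choose_spec.choose_spec.choose)
    else none

/-- The graph of an element. -/
def graphOf {lam S : Type} (f : Elem lam S) : Set (lam × lam) :=
  {p | (f p.1 p.2).isSome}

/-- `Valid n f` says that `f` is an element of `𝓘_λ^n(S)`: it is a partial
injective labelled map (in both directions) of rank at most `n`. -/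
def Valid {lam S : Type} (n : ℕ) (f : Elem lam S) : Prop :=
  (∀ ⦃x y₁ y₂⦄, (f x y₁).isSome → (f x y₂).isSome → y₁ = y₂) ∧
  (∀ ⦃x₁ x₂ y⦄, (f x₁ y).isSome → (f x₂ y).isSome → x₁ = x₂) ∧
  (graphOf f).Finite ∧ (graphOf f).ncard ≤ n

/-- The element with rows `(a₁,…,a_i)`, `(s₁,…,s_i)`, `(b₁,…,b_i)`. -/
noncomputable def mk3 {lam S : Type} {i : ℕ} (a : Fin i → lam) (s : Fin i → S)
    (b : Fin i → lam) : Elem lam S :=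
  fun x y => if h : ∃ j, a j = x ∧ b j = y then some (s h.choose) else none

/-- Green's relation `𝓙` in the monoid `S`. -/
def GreenJS {S : Type} [Monoid S] (x y : S) : Prop :=
  (∃ u v, x = u * y * v) ∧ (∃ u v, y = u * x * v)

/-- `f ∈ T¹ g T¹` in the semigroup `T = 𝓘_λ^n(S)`. -/
def JBelowI {lam S : Type} [Mul S] (n : ℕ) (f g : Elem lam S) : Prop :=
  f = g ∨ (∃ u : Elem lam S, Valid n u ∧ f = mulE u g) ∨
    (∃ v : Elem lam S, Valid n v ∧ f = mulE g v) ∨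
    (∃ u v : Elem lam S, Valid n u ∧ Valid n v ∧ f = mulE (mulE u g) v)

/-- Green's relation `𝓙` in the semigroup `𝓘_λ^n(S)` (with identity adjoined). -/
def GreenJI {lam S : Type} [Mul S] (n : ℕ) (f g : Elem lam S) : Prop :=
  JBelowI n f g ∧ JBelowI n g f

end ISemExt

open Function

theorem rel_apply_of_mem_periodicPts {α ι : Type*} {r : α → α → Prop} [IsPreorder α r]
    {s : ι → α} {f : ι → ι} (h : ∀ j, r (s j) (s (f j))) {x : ι} (hx : x ∈ periodicPts f) :
    r (s (f x)) (s x) := by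
  have along_orbit : ∀ m j, r (s j) (s (f^[m] j)) := by
    intro m
    induction m with
    | zero => exact fun j => refl_of r (s j)
    | succ m ih => exact fun j => trans_of r (h j) (iterate_succ_apply f m j ▸ ih (f j))
  obtain ⟨m, hm, hx⟩ := hx
  have := along_orbit (m - 1) (f x)
  rwa [← iterate_succ_apply, Nat.succ_eq_add_one, Nat.sub_add_cancel hm, hx.eq] at this

theorem exists_injective_of_forall_exists {ι κ : Type*} {R P : ι → κ → Prop}
    (h : ∀ j, ∃ k, R j k ∧ P j k) (hR : ∀ j₁ j₂ k, R j₁ k → R j₂ k → j₁ = j₂) :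
    ∃ π : ι → κ, Injective π ∧ ∀ j, P j (π j) := by
  choose π hRπ hPπ using h
  exact ⟨π, fun j₁ j₂ e => hR j₁ j₂ _ (hRπ j₁) (e ▸ hRπ j₂), hPπ⟩

namespace ISemExt

variable {lam S : Type}

def JBelowS [Monoid S] (x y : S) : Prop := ∃ u v, x = u * y * v

instance [Monoid S] : IsPreorder S JBelowS where
  refl x := ⟨1, 1, by simp⟩
  trans _ _ _ := fun ⟨u, v, hxy⟩ ⟨p, q, hyz⟩ => ⟨u * p, q * v, by simp [hxy, hyz, mul_assoc]⟩

section mk3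

variable {i : ℕ} {a b : Fin i → lam} {s : Fin i → S}

theorem mk3_apply (ha : Injective a) (j : Fin i) : mk3 a s b (a j) (b j) = some (s j) := by
  have hex : ∃ k, a k = a j ∧ b k = b j := ⟨j, rfl, rfl⟩
  rw [mk3, dif_pos hex, ha hex.choose_spec.1]

theorem exists_of_mk3_eq_some {x y : lam} {w : S} (h : mk3 a s b x y = some w) :
    ∃ j, a j = x ∧ b j = y ∧ s j = w := by
  unfold mk3 at h
  split_ifs at h with hex
  exact ⟨hex.choose, hex.choose_spec.1, hex.choose_spec.2, Option.some.inj h⟩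

theorem mk3_eq_none {x y : lam} (h : ¬ ∃ j, a j = x ∧ b j = y) : mk3 a s b x y = none :=
  dif_neg h

theorem graphOf_mk3 (ha : Injective a) :
    graphOf (mk3 a s b) = Set.range fun j => (a j, b j) := by
  ext ⟨x, y⟩
  simp only [graphOf, Set.mem_ofPred_eq, Set.mem_range, Prod.mk.injEq, Option.isSome_iff_exists]
  constructor
  · rintro ⟨w, hw⟩
    obtain ⟨j, hx, hy, -⟩ := exists_of_mk3_eq_some hw
    exact ⟨j, hx, hy⟩
  · rintro ⟨j, rfl, rfl⟩
    exact ⟨s j, mk3_apply ha j⟩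

theorem valid_mk3 {n : ℕ} (ha : Injective a) (hb : Injective b) (hin : i ≤ n) :
    Valid n (mk3 a s b) := by
  have hab : Injective fun j => (a j, b j) := fun j₁ j₂ e => ha (Prod.ext_iff.mp e).1
  refine ⟨?_, ?_, ?_, ?_⟩
  · intro x y₁ y₂ h₁ h₂
    obtain ⟨j₁, rfl, rfl, -⟩ := exists_of_mk3_eq_some (Option.get_mem h₁)
    obtain ⟨j₂, hj, rfl, -⟩ := exists_of_mk3_eq_some (Option.get_mem h₂)
    rw [ha hj]
  · intro x₁ x₂ y h₁ h₂
    obtain ⟨j₁, rfl, rfl, -⟩ := exists_of_mk3_eq_some (Option.get_mem h₁)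
    obtain ⟨j₂, rfl, hj, -⟩ := exists_of_mk3_eq_some (Option.get_mem h₂)
    rw [hb hj]
  · rw [graphOf_mk3 ha]
    exact Set.finite_range _
  · rw [graphOf_mk3 ha, Set.ncard_range_of_injective hab, Nat.card_eq_fintype_card,
      Fintype.card_fin]
    exact hin

end mk3

section mulE

variable [Mul S] {f g : Elem lam S} {x z : lam}

theorem exists_of_mulE_eq_some {w : S} (h : mulE f g x z = some w) :
    ∃ y p q, f x y = some p ∧ g y z = some q ∧ w = p * q := by
  unfold mulE at h
  split_ifs at h with hex
  obtain ⟨hp, hq⟩ := hex.choose_spec.choose_spec.choose_spec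
  exact ⟨_, _, _, hp, hq, (Option.some.inj h).symm⟩

theorem mulE_eq_some {y : lam} {p q : S} (hp : f x y = some p) (hq : g y z = some q)
    (huniq : ∀ y' p' q', f x y' = some p' → g y' z = some q' → p' * q' = p * q) :
    mulE f g x z = some (p * q) := by
  have hex : ∃ y p q, f x y = some p ∧ g y z = some q := ⟨y, p, q, hp, hq⟩
  obtain ⟨hp', hq'⟩ := hex.choose_spec.choose_spec.choose_spec
  rw [mulE, dif_pos hex, huniq _ _ _ hp' hq']

theorem mulE_eq_none (h : ¬ ∃ y p q, f x y = some p ∧ g y z = some q) : mulE f g x z = none :=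
  dif_neg h

theorem mulE_mk3_mk3 {i m : ℕ} {a : Fin i → lam} {c d : Fin m → lam}
    (ha : Injective a) (hc : Injective c) (u : Fin i → S) (π : Fin i → Fin m) (t : Fin m → S) :
    mulE (mk3 a u (c ∘ π)) (mk3 c t d) = mk3 a (fun j => u j * t (π j)) (d ∘ π) := by
  funext x z
  by_cases hex : ∃ j, a j = x ∧ (d ∘ π) j = z
  · obtain ⟨j, rfl, rfl⟩ := hex
    rw [mk3_apply ha j]
    refine mulE_eq_some (mk3_apply ha j) (mk3_apply hc (π j)) ?_
    intro y p q hp hq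
    obtain ⟨j', hj', rfl, rfl⟩ := exists_of_mk3_eq_some hp
    obtain ⟨k, hk, -, rfl⟩ := exists_of_mk3_eq_some hq
    obtain rfl := ha hj'
    obtain rfl := hc hk
    rfl
  · rw [mk3_eq_none hex]
    refine mulE_eq_none fun ⟨y, p, q, hp, hq⟩ => hex ?_
    obtain ⟨j, rfl, rfl, -⟩ := exists_of_mk3_eq_some hp
    obtain ⟨k, hk, rfl, -⟩ := exists_of_mk3_eq_some hq
    exact ⟨j, rfl, by rw [hc hk]; rfl⟩

end mulE

theorem exists_injective_jBelowS_of_jBelowI [Monoid S] {n i m : ℕ} {a b : Fin i → lam}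
    {c d : Fin m → lam} {s : Fin i → S} {t : Fin m → S} (ha : Injective a) (hb : Injective b)
    (h : JBelowI n (mk3 a s b) (mk3 c t d)) :
    ∃ π : Fin i → Fin m, Injective π ∧ ∀ j, JBelowS (s j) (t (π j)) := by
  have entry (j : Fin i) : mk3 a s b (a j) (b j) = some (s j) := mk3_apply ha j
  suffices ∃ R : Fin i → Fin m → Prop, (∀ j₁ j₂ k, R j₁ k → R j₂ k → j₁ = j₂) ∧
      ∀ j, ∃ k, R j k ∧ JBelowS (s j) (t k) by
    obtain ⟨R, hR, hst⟩ := this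
    exact exists_injective_of_forall_exists hst hR
  rcases h with h | ⟨u, -, h⟩ | ⟨v, -, h⟩ | ⟨u, v, hu, -, h⟩ <;> rw [h] at entry
  · refine ⟨fun j k => d k = b j, fun j₁ j₂ k h₁ h₂ => hb (h₁.symm.trans h₂), fun j => ?_⟩
    obtain ⟨k, -, hk, hst⟩ := exists_of_mk3_eq_some (entry j)
    exact ⟨k, hk, hst ▸ refl_of JBelowS (t k)⟩
  · refine ⟨fun j k => d k = b j, fun j₁ j₂ k h₁ h₂ => hb (h₁.symm.trans h₂), fun j => ?_⟩
    obtain ⟨y, p, q, -, hq, hs⟩ := exists_of_mulE_eq_some (entry j)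
    obtain ⟨k, -, hk, rfl⟩ := exists_of_mk3_eq_some hq
    exact ⟨k, hk, p, 1, by rw [hs, mul_one]⟩
  · refine ⟨fun j k => c k = a j, fun j₁ j₂ k h₁ h₂ => ha (h₁.symm.trans h₂), fun j => ?_⟩
    obtain ⟨y, p, q, hp, -, hs⟩ := exists_of_mulE_eq_some (entry j)
    obtain ⟨k, hk, -, rfl⟩ := exists_of_mk3_eq_some hp
    exact ⟨k, hk, 1, q, by rw [hs, one_mul]⟩
  · refine ⟨fun j k => (u (a j) (c k)).isSome, fun j₁ j₂ k h₁ h₂ => ha (hu.2.1 h₁ h₂),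
      fun j => ?_⟩
    obtain ⟨y, p, q, hp, -, hs⟩ := exists_of_mulE_eq_some (entry j)
    obtain ⟨y', p', q', hp', hq', rfl⟩ := exists_of_mulE_eq_some hp
    obtain ⟨k, rfl, -, rfl⟩ := exists_of_mk3_eq_some hq'
    exact ⟨k, by simp [hp'], p', q, hs⟩

theorem jBelowI_mk3_of_injective [Monoid S] {n i m : ℕ} (hin : i ≤ n) {a b : Fin i → lam}
    {c d : Fin m → lam} {s : Fin i → S} {t : Fin m → S} (ha : Injective a) (hb : Injective b)
    (hc : Injective c) (hd : Injective d) {π : Fin i → Fin m} (hπ : Injective π)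
    (h : ∀ j, JBelowS (s j) (t (π j))) : JBelowI n (mk3 a s b) (mk3 c t d) := by
  choose u v huv using h
  refine Or.inr <| Or.inr <| Or.inr ⟨mk3 a u (c ∘ π), mk3 (d ∘ π) v b,
    valid_mk3 ha (hc.comp hπ) hin, valid_mk3 (hd.comp hπ) hb hin, ?_⟩
  calc mk3 a s b = mk3 a (fun j => u j * t (π j) * v j) b := congrArg (mk3 a · b) (funext huv)
    _ = mulE (mk3 a (fun j => u j * t (π j)) (d ∘ π)) (mk3 (d ∘ π) v b) :=
      (mulE_mk3_mk3 ha (hd.comp hπ) _ id v).symm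
    _ = mulE (mulE (mk3 a u (c ∘ π)) (mk3 c t d)) (mk3 (d ∘ π) v b) := by
      rw [mulE_mk3_mk3 ha hc]

theorem greenJ_iff_general (lam S : Type) [Monoid S]
    (n i : ℕ) (hin : i ≤ n)
    (a b c d : Fin i → lam) (s t : Fin i → S)
    (ha : Function.Injective a) (hb : Function.Injective b)
    (hc : Function.Injective c) (hd : Function.Injective d) :
    GreenJI n (mk3 a s b) (mk3 c t d) ↔
      ∃ π : Equiv.Perm (Fin i), ∀ j, GreenJS (s j) (t (π j)) := by
  constructor
  · rintro ⟨hxy, hyx⟩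
    obtain ⟨π, hπ, hst⟩ := exists_injective_jBelowS_of_jBelowI ha hb hxy
    obtain ⟨σ, hσ, hts⟩ := exists_injective_jBelowS_of_jBelowI hc hd hyx
    have hss (j : Fin i) : JBelowS (s (σ (π j))) (s j) :=
      rel_apply_of_mem_periodicPts (f := σ ∘ π) (fun j => trans_of JBelowS (hst j) (hts (π j)))
        ((hσ.comp hπ).mem_periodicPts j)
    exact ⟨Equiv.ofBijective π hπ.bijective_of_finite,
      fun j => ⟨hst j, trans_of JBelowS (hts (π j)) (hss j)⟩⟩
  · rintro ⟨π, hst⟩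
    refine ⟨jBelowI_mk3_of_injective hin ha hb hc hd π.injective fun j => (hst j).1,
      jBelowI_mk3_of_injective hin hc hd ha hb π.symm.injective fun k => ?_⟩
    have hts : JBelowS (t (π (π.symm k))) (s (π.symm k)) := (hst (π.symm k)).2
    rwa [π.apply_symm_apply] at hts

/-- Characterization of Green's relation `𝓙` on `𝓘_λ^n(S)` for a monoid `S`. -/
theorem greenJ_iff (lam S : Type) [Nonempty lam] [Monoid S]
    (n i : ℕ) (hn : 0 < n) (hcard : (n : Cardinal) ≤ Cardinal.mk lam)
    (hi : 0 < i) (hin : i ≤ n)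
    (a b c d : Fin i → lam) (s t : Fin i → S)
    (ha : Function.Injective a) (hb : Function.Injective b)
    (hc : Function.Injective c) (hd : Function.Injective d) :
    GreenJI n (mk3 a s b) (mk3 c t d) ↔
      ∃ π : Equiv.Perm (Fin i), ∀ j, GreenJS (s j) (t (π j)) :=
  greenJ_iff_general lam S n i hin a b c d s t ha hb hc hd

end ISemExt
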